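/- arXiv:cs/0608095 — 4 statements merged into one kernel-verified Lean document; each statement's English description precedes it below -/
import Mathlib

section
/- If Φ is a connected set of computers and its closure of universal computers Φ̄^U := {C : C emulates every D ∈ Φ, and some X ∈ Φ emulates C} has at least 2 elements, then Φ̄^U is branching: for every C ∈ Φ̄^U, (i) if C →(x⊗y) D with D ∈ Φ̄^U then (C →x) ∈ Φ̄^U, and (ii) there exists a nonempty string x with (C →x) ∈ Φ̄^U. -/
open scoped Classical

/-- Binary strings. -/
abbrev Str := List Bool

/-- A computer: a partial function on binary strings (`none` = undefined). -/
abbrev Computer := Str → Option Str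

/-- `C` emulates `D` via the string `x`: `C (x ⊗ s) = D s` for all `s`. -/
def emulates (C D : Computer) (x : Str) : Prop := ∀ s : Str, C (x ++ s) = D s

/-- The computer `C →x`, i.e. `s ↦ C (x ⊗ s)`. -/
def shiftC (C : Computer) (x : Str) : Computer := fun s => C (x ++ s)

/-- `C` emulates `D` via some string. -/
def emu (C D : Computer) : Prop := ∃ x : Str, emulates C D x

/-- `Φ` is connected: some `U ∈ Φ` emulates every member of `Φ`. -/
def Connected (Φ : Set Computer) : Prop := ∃ U ∈ Φ, ∀ X ∈ Φ, emu U X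

/-- The set `Φ^U` of `Φ`-universal computers. -/
def univSet (Φ : Set Computer) : Set Computer := {U | U ∈ Φ ∧ ∀ X ∈ Φ, emu U X}

/-- The closure `Φ̄^U`: computers emulating every member of `Φ` and emulated by some member of `Φ`. -/
def closureU (Φ : Set Computer) : Set Computer :=
  {C | (∀ D ∈ Φ, emu C D) ∧ ∃ X ∈ Φ, emu X C}

/-- A branching set of computers. -/
def Branching (Φ : Set Computer) : Prop :=
  ∀ C ∈ Φ, (∀ x y : Str, shiftC C (x ++ y) ∈ Φ → shiftC C x ∈ Φ) ∧
    ∃ x : Str, x ≠ [] ∧ shiftC C x ∈ Φ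

/-! Emulation is transitive, and `C →x` emulates exactly what `C` emulates through an extension
of `x`. Hence any computer sitting between two members of `Φ̄^U` in the emulation order is
again in `Φ̄^U`, which gives (i). Every member of `Φ̄^U` emulates every other one (through a
member of `Φ` emulating it), so `C` reaches a second member `D ≠ C` as `C →x`, and `x ≠ λ`
because `C →λ = C`; this gives (ii). -/

theorem emulates_iff_shiftC_eq {C D : Computer} {x : Str} : emulates C D x ↔ shiftC C x = D :=
  funext_iff.symm

theorem emu_iff_exists_shiftC_eq {C D : Computer} : emu C D ↔ ∃ x, shiftC C x = D := by
  simp only [emu, emulates_iff_shiftC_eq]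

@[simp]
theorem shiftC_nil (C : Computer) : shiftC C [] = C := rfl

theorem shiftC_append (C : Computer) (x y : Str) :
    shiftC C (x ++ y) = shiftC (shiftC C x) y := by
  funext s
  simp only [shiftC, List.append_assoc]

theorem emu_shiftC (C : Computer) (x : Str) : emu C (shiftC C x) :=
  emu_iff_exists_shiftC_eq.2 ⟨x, rfl⟩

theorem emu_trans {B C D : Computer} (hBC : emu B C) (hCD : emu C D) : emu B D := by
  obtain ⟨x, rfl⟩ := emu_iff_exists_shiftC_eq.1 hBC
  obtain ⟨y, rfl⟩ := emu_iff_exists_shiftC_eq.1 hCD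
  exact emu_iff_exists_shiftC_eq.2 ⟨x ++ y, shiftC_append B x y⟩

theorem mem_closureU_of_emu_of_emu {Φ : Set Computer} {B D E : Computer}
    (hB : B ∈ closureU Φ) (hD : D ∈ closureU Φ) (hBE : emu B E) (hED : emu E D) :
    E ∈ closureU Φ := by
  obtain ⟨-, X, hXΦ, hXB⟩ := hB
  exact ⟨fun F hF => emu_trans hED (hD.1 F hF), X, hXΦ, emu_trans hXB hBE⟩

theorem emu_of_mem_closureU {Φ : Set Computer} {C D : Computer}
    (hC : C ∈ closureU Φ) (hD : D ∈ closureU Φ) : emu C D := by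
  obtain ⟨-, Y, hYΦ, hYD⟩ := hD
  exact emu_trans (hC.1 Y hYΦ) hYD

theorem closureU_branching_general (Φ : Set Computer)
    (h2 : (closureU Φ).Nontrivial) : Branching (closureU Φ) := by
  intro C hC
  refine ⟨fun x y hxy => ?_, ?_⟩
  · refine mem_closureU_of_emu_of_emu hC hxy (emu_shiftC C x) ?_
    rw [shiftC_append]
    exact emu_shiftC _ y
  · obtain ⟨D, hD, hDC⟩ := h2.exists_ne C
    obtain ⟨x, rfl⟩ := emu_iff_exists_shiftC_eq.1 (emu_of_mem_closureU hC hD)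
    refine ⟨x, ?_, hD⟩
    rintro rfl
    exact hDC (shiftC_nil C)

/-- If `Φ` is connected and `Φ̄^U` has at least two elements, then `Φ̄^U` is branching. -/
theorem closureU_branching (Φ : Set Computer) (hconn : Connected Φ)
    (h2 : (closureU Φ).Nontrivial) : Branching (closureU Φ) :=
  closureU_branching_general Φ h2
end

section
/- The set Ξ^U of all universal computers is aperiodic: there exists V ∈ Ξ^U with μ_V^{(1)}(V | Ξ^U) > 0, i.e., V emulates itself via a single bit. -/
open scoped Classical

/-- A computer is partial recursive if the corresponding partial function is `Partrec`. -/
def isPR (C : Computer) : Prop := Partrec (fun x => Part.ofOption (C x))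

/-- `Ξ^U`: the set of universal computers, i.e. partial recursive computers that
emulate every (partial recursive) computer via some string. -/
def XiU : Set Computer := {C | isPR C ∧ ∀ M : Computer, isPR M → emu C M}

/-- The `Φ`-tree of `C`: inputs making `C` emulate a member of `Φ`. -/
def tree (Φ : Set Computer) (C : Computer) : Set Str := {x | shiftC C x ∈ Φ}

/-- Helper for path probability, recursing over the reversed path. -/
noncomputable def pathProbAux (T : Set Str) : Str → ℝ
  | [] => 1
  | b :: r => if r.reverse ++ [!b] ∈ T then pathProbAux T r / 2 else pathProbAux T r

/-- Path probability on the tree `T`: `μ(λ) = 1`, and the probability halves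
exactly at binary branch points (where the sibling node is also in `T`). -/
noncomputable def pathProb (T : Set Str) (x : Str) : ℝ := pathProbAux T x.reverse

/-- The `n`-step computer probability `μ_C^{(n)}(D|Φ)`: probability of arriving
at the computer `D` after `n` steps of the random walk on the `Φ`-tree of `C`. -/
noncomputable def nstep (Φ : Set Computer) (C D : Computer) (n : ℕ) : ℝ :=
  ∑' x : {x : Str // x.length = n ∧ shiftC C x = D}, pathProb (tree Φ C) (x : Str)


/-!
Given a universal `U`, let `V` skip leading zeros and hand what follows the first one to `U`:
`V (0 s) = V s`, `V (1 s) = U s`, `V λ = λ`. Then `V` emulates `U` via `1`, hence is universal,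
and emulates itself via `0`; a one-bit self-emulation gives a path of length one from `V` to
`V`, and every path has positive probability. A universal `U` is obtained from the enumeration
of partial recursive functions, reading the index `k` in unary as the prefix `0ᵏ1`.
-/

open Nat.Partrec (Code)

theorem pathProb_pos (T : Set Str) (x : Str) : 0 < pathProb T x := by
  unfold pathProb
  induction x.reverse with
  | nil => exact one_pos
  | cons b r ih =>
    rw [pathProbAux]
    split_ifs
    · exact half_pos ih
    · exact ih

theorem nstep_pos_of_emulates (Φ : Set Computer) {C D : Computer} {x : Str}
    (h : emulates C D x) : 0 < nstep Φ C D x.length := by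
  have : Finite {y : Str // y.length = x.length ∧ shiftC C y = D} :=
    ((List.finite_length_eq Bool x.length).subset fun _ hy => hy.1).to_subtype
  exact Summable.of_finite.tsum_pos (fun y => (pathProb_pos _ _).le)
    ⟨x, rfl, funext h⟩ (pathProb_pos _ _)

def afterFirstTrue (s : Str) : Option Str := (s.dropWhile (!·)).tail?

@[simp] theorem afterFirstTrue_false_cons (s : Str) :
    afterFirstTrue (false :: s) = afterFirstTrue s := by
  simp [afterFirstTrue]

@[simp] theorem afterFirstTrue_true_cons (s : Str) : afterFirstTrue (true :: s) = some s := by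
  simp [afterFirstTrue]

theorem afterFirstTrue_replicate (k : ℕ) (t : Str) :
    afterFirstTrue (List.replicate k false ++ true :: t) = some t := by
  induction k with
  | zero => simp
  | succ k ih => simpa [List.replicate_succ] using ih

theorem primrec_afterFirstTrue : Primrec afterFirstTrue := by
  have h := Primrec.list_casesOn (Primrec.list_dropWhile (p := (!·)) Primrec.not)
    (Primrec.const (none : Option Str)) (Primrec.option_some.comp (Primrec.snd.comp .snd)).to₂
  refine h.of_eq fun s => ?_
  unfold afterFirstTrue
  cases s.dropWhile (!·) <;> rfl

/-- Splits `0ᵏ1t` into `(k, t)`. -/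
def splitUnary (s : Str) : Option (ℕ × Str) :=
  (afterFirstTrue s).map fun t => (s.length - t.length - 1, t)

theorem splitUnary_replicate (k : ℕ) (t : Str) :
    splitUnary (List.replicate k false ++ true :: t) = some (k, t) := by
  simp only [splitUnary, afterFirstTrue_replicate, Option.map_some, List.length_append,
    List.length_replicate, List.length_cons]
  congr 2
  omega

theorem primrec_splitUnary : Primrec splitUnary :=
  Primrec.option_map primrec_afterFirstTrue <|
    (Primrec.pair (Primrec.nat_sub.comp (Primrec.nat_sub.comp (Primrec.list_length.comp .fst)
      (Primrec.list_length.comp .snd)) (Primrec.const 1)) .snd).to₂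

theorem isPR_of_partrec {f : Str →. Str} (hf : Partrec f) : isPR fun s => (f s).toOption :=
  hf.of_eq fun s => (Part.of_toOption (f s)).symm

def univPart (s : Str) : Part Str :=
  (Part.ofOption (splitUnary s)).bind fun p =>
    ((Denumerable.ofNat Code p.1).eval (Encodable.encode p.2)).bind fun n =>
      Part.ofOption (Encodable.decode n)

theorem partrec_univPart : Partrec univPart :=
  (Computable.ofOption primrec_splitUnary.to_comp).bind <|
    (Code.eval_part.comp ((Computable.ofNat Code).comp (Computable.fst.comp .snd))
      (Computable.encode.comp (Computable.snd.comp .snd))).bind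
    (Computable.ofOption (Computable.decode.comp .snd))

noncomputable def univ : Computer := fun s => (univPart s).toOption

theorem univ_mem_XiU : univ ∈ XiU := by
  refine ⟨isPR_of_partrec partrec_univPart, fun M hM => ?_⟩
  obtain ⟨c, hc⟩ := Code.exists_code.1 hM
  refine ⟨List.replicate (Encodable.encode c) false ++ [true], fun s => ?_⟩
  have : univPart (List.replicate (Encodable.encode c) false ++ [true] ++ s) = M s := by
    rw [univPart, List.append_assoc, List.singleton_append, splitUnary_replicate]
    simp only [Part.coe_some, Part.bind_some, Denumerable.ofNat_encode, hc]
    cases h : M s <;> simp [h, Encodable.encodek]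
  simp only [univ, this]
  convert Part.to_ofOption (M s)

def padZeros (U : Computer) (s : Str) : Option Str := (afterFirstTrue s).elim (some []) U

theorem padZeros_emulates_self (U : Computer) : emulates (padZeros U) (padZeros U) [false] :=
  fun s => by simp [padZeros]

theorem padZeros_emulates (U : Computer) : emulates (padZeros U) U [true] :=
  fun s => by simp [padZeros]

theorem isPR_padZeros {U : Computer} (hU : isPR U) : isPR (padZeros U) := by
  have h : Partrec fun s => Option.casesOn (afterFirstTrue s) (Part.some ([] : Str))
      fun t => Part.ofOption (U t) :=
    Partrec.optionCasesOn_right primrec_afterFirstTrue.to_comp (Computable.const _)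
      (hU.comp Computable.snd).to₂
  refine h.of_eq fun s => ?_
  unfold padZeros
  cases afterFirstTrue s <;> rfl

theorem padZeros_mem_XiU {U : Computer} (hU : U ∈ XiU) : padZeros U ∈ XiU := by
  refine ⟨isPR_padZeros hU.1, fun M hM => ?_⟩
  obtain ⟨x, hx⟩ := hU.2 M hM
  exact ⟨true :: x, fun s => by rw [List.cons_append, ← List.singleton_append,
    padZeros_emulates U, hx]⟩

/-- `Ξ^U` is aperiodic: some universal computer `V` emulates itself via a single
bit, so `μ_V^{(1)}(V|Ξ^U) > 0`. -/
theorem xiU_aperiodic :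
    ∃ V ∈ XiU, (∃ b : Bool, emulates V V [b]) ∧ 0 < nstep XiU V V 1 :=
  ⟨padZeros univ, padZeros_mem_XiU univ_mem_XiU, ⟨false, padZeros_emulates_self univ⟩,
    nstep_pos_of_emulates XiU (padZeros_emulates_self univ)⟩
end

section
/- Lower bound for stationary computer probability: if Φ is positive recurrent with stationary distribution μ(·|Φ), then for all C, D ∈ Φ, 2^{-K_C(D)} ≤ μ(D|Φ)/μ(C|Φ) ≤ 2^{K_D(C)}, where K_C(D) is emulation complexity. -/
open scoped Classical

/-- Emulation complexity: minimal length of a string via which `C` emulates `D`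
(`⊤` = ∞ if none exists). -/
noncomputable def EK (C D : Computer) : ℕ∞ :=
  sInf {n : ℕ∞ | ∃ x : Str, (x.length : ℕ∞) = n ∧ emulates C D x}

/-- Kolmogorov complexity of the string `s` relative to `C` (`⊤` = ∞). -/
noncomputable def Kstr (C : Computer) (s : Str) : ℕ∞ :=
  sInf {n : ℕ∞ | ∃ p : Str, (p.length : ℕ∞) = n ∧ C p = some s}

/-- `Φ` is positive recurrent with stationary distribution `μ`: `Φ` is branching
and irreducible, the `n`-step probabilities `μ_C^{(n)}(D|Φ)` converge to `μ D`
independently of the starting computer `C`, the limits are strictly positive and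
form a probability distribution on `Φ`. -/
structure PosRecurrent (Φ : Set Computer) (μ : Computer → ℝ) : Prop where
  branching : Branching Φ
  irreducible : ∀ C ∈ Φ, ∀ D ∈ Φ, emu C D
  tendsto : ∀ C ∈ Φ, ∀ D ∈ Φ,
    Filter.Tendsto (fun n => nstep Φ C D n) Filter.atTop (nhds (μ D))
  pos : ∀ D ∈ Φ, 0 < μ D
  sum_one : ∑' D : Φ, μ (D : Computer) = 1

/-- `2^{-k}` for an extended natural `k`, with `2^{-∞} = 0`. -/
noncomputable def twoPowNeg (k : ℕ∞) : ℝ := if k = ⊤ then 0 else (2 : ℝ)⁻¹ ^ k.toNat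

/-- Stationary string probability `μ(s|Φ)`: total stationary probability of the
computers in `Φ` whose output on the empty input is `s` (`s = none` meaning `∞`). -/
noncomputable def strProb (Φ : Set Computer) (μ : Computer → ℝ) (s : Option Str) : ℝ :=
  ∑' U : {U : Computer // U ∈ Φ ∧ U [] = s}, μ (U : Computer)

/-! The walk on the `Φ`-tree of `C` is superadditive along concatenated paths:
`μ_C^{(m)}(C|Φ) · μ_C^{(n)}(D|Φ) ≤ μ_C^{(m+n)}(D|Φ)`, because an input reaching `C` followed by one
leading from `C` to `D` is an input leading from `C` to `D`, with the product of the path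
probabilities. Letting `m → ∞` gives `μ(C|Φ) · μ_C^{(n)}(D|Φ) ≤ μ(D|Φ)`, and for `n = K_C(D)` an
emulating input of length `n` alone contributes at least `2^{-n}` to `μ_C^{(n)}(D|Φ)`. -/

open Filter Topology

lemma pow_length_le_pathProbAux (T : Set Str) (l : Str) :
    (2⁻¹ : ℝ) ^ l.length ≤ pathProbAux T l := by
  induction l with
  | nil => simp [pathProbAux]
  | cons b r ih =>
    have halved : (2⁻¹ : ℝ) ^ r.length * 2⁻¹ ≤ pathProbAux T r / 2 := by
      rw [div_eq_mul_inv]; gcongr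
    rw [pathProbAux, List.length_cons, pow_succ]
    split_ifs
    · exact halved
    · exact (mul_le_of_le_one_right (by positivity) (by norm_num)).trans ih

lemma pathProbAux_append (T : Set Str) (r s : Str) :
    pathProbAux T (r ++ s) = pathProbAux {z | s.reverse ++ z ∈ T} r * pathProbAux T s := by
  induction r with
  | nil => simp [pathProbAux]
  | cons b r ih =>
    simp only [List.cons_append, pathProbAux, List.reverse_append, List.append_assoc]
    split_ifs <;> simp_all [div_mul_eq_mul_div]

lemma pow_length_le_pathProb (T : Set Str) (x : Str) : (2⁻¹ : ℝ) ^ x.length ≤ pathProb T x := by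
  simpa [pathProb] using pow_length_le_pathProbAux T x.reverse

lemma pathProb_nonneg (T : Set Str) (x : Str) : 0 ≤ pathProb T x :=
  (by positivity : (0 : ℝ) ≤ 2⁻¹ ^ x.length).trans (pow_length_le_pathProb T x)

lemma pathProb_append (T : Set Str) (x y : Str) :
    pathProb T (x ++ y) = pathProb T x * pathProb {z | x ++ z ∈ T} y := by
  rw [pathProb, List.reverse_append, pathProbAux_append, List.reverse_reverse, mul_comm, pathProb,
    pathProb]

lemma shiftC_shiftC (C : Computer) (x y : Str) : shiftC (shiftC C x) y = shiftC C (x ++ y) := by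
  funext s
  simp [shiftC, List.append_assoc]

lemma tree_shiftC (Φ : Set Computer) (C : Computer) (x : Str) :
    tree Φ (shiftC C x) = {z | x ++ z ∈ tree Φ C} := by
  ext z
  simp [tree, shiftC_shiftC]

instance finite_length_eq_and (P : Str → Prop) (n : ℕ) :
    Finite {x : Str // x.length = n ∧ P x} :=
  (List.finite_length_eq Bool n).subset fun _ hx => hx.1

lemma nstep_nonneg (Φ : Set Computer) (C D : Computer) (n : ℕ) : 0 ≤ nstep Φ C D n :=
  tsum_nonneg fun _ => pathProb_nonneg _ _

lemma pathProb_le_nstep (Φ : Set Computer) {C D : Computer} {x : Str} (hx : shiftC C x = D) :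
    pathProb (tree Φ C) x ≤ nstep Φ C D x.length :=
  Summable.of_finite.le_tsum (f := fun y : {y : Str // y.length = x.length ∧ shiftC C y = D} =>
    pathProb (tree Φ C) y) ⟨x, rfl, hx⟩ fun _ _ => pathProb_nonneg _ _

lemma nstep_mul_nstep_le (Φ : Set Computer) (A B D : Computer) (m n : ℕ) :
    nstep Φ A B m * nstep Φ B D n ≤ nstep Φ A D (m + n) := by
  let concat : {x : Str // x.length = m ∧ shiftC A x = B} ×
      {y : Str // y.length = n ∧ shiftC B y = D} → {z : Str // z.length = m + n ∧ shiftC A z = D} :=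
    fun p => ⟨p.1.1 ++ p.2.1, by simp [p.1.2.1, p.2.2.1], by rw [← shiftC_shiftC, p.1.2.2, p.2.2.2]⟩
  have concat_injective : Function.Injective concat := by
    rintro ⟨⟨x, hx, _⟩, ⟨y, _⟩⟩ ⟨⟨x', hx', _⟩, ⟨y', _⟩⟩ h
    obtain ⟨rfl, rfl⟩ := List.append_inj (congrArg Subtype.val h) (hx.trans hx'.symm)
    rfl
  rw [nstep, nstep, Summable.of_finite.tsum_mul_tsum .of_finite .of_finite]
  refine Summable.of_finite.tsum_le_tsum_of_inj concat concat_injective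
    (fun _ _ => pathProb_nonneg _ _) (fun p => ?_) .of_finite
  rw [pathProb_append, ← tree_shiftC, p.1.2.2]

lemma mul_nstep_le_of_tendsto {Φ : Set Computer} {C D : Computer} {a b : ℝ}
    (hC : Tendsto (nstep Φ C C ·) atTop (𝓝 a)) (hD : Tendsto (nstep Φ C D ·) atTop (𝓝 b))
    (n : ℕ) : a * nstep Φ C D n ≤ b :=
  le_of_tendsto_of_tendsto' (hC.mul_const _) (hD.comp (tendsto_add_atTop_nat n))
    fun m => nstep_mul_nstep_le Φ C C D m n

lemma exists_emulates_length_eq_EK {C D : Computer} (h : EK C D ≠ ⊤) :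
    ∃ x, emulates C D x ∧ (x.length : ℕ∞) = EK C D := by
  have hne : {n : ℕ∞ | ∃ x : Str, (x.length : ℕ∞) = n ∧ emulates C D x}.Nonempty :=
    Set.nonempty_iff_ne_empty.2 fun he => h (by rw [EK, he, sInf_empty])
  obtain ⟨x, hx, he⟩ := csInf_mem hne
  exact ⟨x, he, hx⟩

lemma twoPowNeg_EK_le_nstep (Φ : Set Computer) (C D : Computer) :
    twoPowNeg (EK C D) ≤ nstep Φ C D (EK C D).toNat := by
  rcases eq_or_ne (EK C D) ⊤ with htop | hfin
  · rw [htop, twoPowNeg, if_pos rfl]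
    exact nstep_nonneg _ _ _ _
  · obtain ⟨x, hx, hEK⟩ := exists_emulates_length_eq_EK hfin
    rw [← hEK, twoPowNeg, if_neg (ENat.natCast_ne_top _), ENat.toNat_natCast]
    exact (pow_length_le_pathProb _ x).trans (pathProb_le_nstep Φ (funext hx))

lemma PosRecurrent.mul_twoPowNeg_EK_le {Φ : Set Computer} {μ : Computer → ℝ}
    (h : PosRecurrent Φ μ) {C D : Computer} (hC : C ∈ Φ) (hD : D ∈ Φ) :
    μ C * twoPowNeg (EK C D) ≤ μ D :=
  calc μ C * twoPowNeg (EK C D)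
      ≤ μ C * nstep Φ C D (EK C D).toNat :=
        mul_le_mul_of_nonneg_left (twoPowNeg_EK_le_nstep Φ C D) (h.pos C hC).le
    _ ≤ μ D := mul_nstep_le_of_tendsto (h.tendsto C hC C hC) (h.tendsto C hC D hD) _

/-- Bound on stationary computer probability via emulation complexity:
`2^{-K_C(D)} ≤ μ(D|Φ)/μ(C|Φ) ≤ 2^{K_D(C)}`, stated multiplicatively as
`μ(C|Φ)·2^{-K_C(D)} ≤ μ(D|Φ)` and `μ(D|Φ)·2^{-K_D(C)} ≤ μ(C|Φ)`. -/
theorem stationary_emulation_bound (Φ : Set Computer) (μ : Computer → ℝ)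
    (h : PosRecurrent Φ μ) (C D : Computer) (hC : C ∈ Φ) (hD : D ∈ Φ) :
    μ C * twoPowNeg (EK C D) ≤ μ D ∧ μ D * twoPowNeg (EK D C) ≤ μ C :=
  ⟨h.mul_twoPowNeg_EK_le hC hD, h.mul_twoPowNeg_EK_le hD hC⟩
end

section
/- Output symmetry of the stationary distribution: if Φ is positive recurrent and closed under an output transformation σ and its inverse, then μ(C|Φ) = μ(σ∘C|Φ) for every C ∈ Φ, and μ(s|Φ) = μ(σ(s)|Φ) for every string s. -/
open scoped Classical

/-- Output transformation: `σ∘C` applies the permutation `σ` to the output of `C`. -/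
def outT (σ : Equiv.Perm Str) (C : Computer) : Computer := fun x => (C x).map σ


/-!
The output transformation `C ↦ σ∘C` commutes with shifting the input, and (since `Φ` is closed
under `σ` and `σ⁻¹`) it fixes the `Φ`-tree of every computer. Hence it maps the paths from `C`
to `D` bijectively onto the paths from `σ∘C` to `σ∘D` with the same path probabilities, so the
`n`-step probabilities agree and so do their limits. The statement about strings follows by
reindexing the sum defining `μ(s|Φ)` along the bijection `C ↦ σ∘C`.
-/

lemma outT_symm_outT (σ : Equiv.Perm Str) (C : Computer) : outT σ.symm (outT σ C) = C := by
  funext x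
  simp [outT, Option.map_map, Function.comp_def]

lemma outT_outT_symm (σ : Equiv.Perm Str) (C : Computer) : outT σ (outT σ.symm C) = C := by
  simpa using outT_symm_outT σ.symm C

lemma outT_injective (σ : Equiv.Perm Str) : Function.Injective (outT σ) :=
  Function.LeftInverse.injective (outT_symm_outT σ)

lemma shiftC_outT (σ : Equiv.Perm Str) (C : Computer) (x : Str) :
    shiftC (outT σ C) x = outT σ (shiftC C x) := rfl

section Invariance

variable {Φ : Set Computer} {σ : Equiv.Perm Str}

lemma outT_mem_iff (h1 : ∀ C ∈ Φ, outT σ C ∈ Φ) (h2 : ∀ C ∈ Φ, outT σ.symm C ∈ Φ)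
    {C : Computer} : outT σ C ∈ Φ ↔ C ∈ Φ :=
  ⟨fun hC => outT_symm_outT σ C ▸ h2 _ hC, h1 C⟩

lemma tree_outT (h1 : ∀ C ∈ Φ, outT σ C ∈ Φ) (h2 : ∀ C ∈ Φ, outT σ.symm C ∈ Φ)
    (C : Computer) : tree Φ (outT σ C) = tree Φ C :=
  Set.ext fun _ => outT_mem_iff h1 h2

lemma nstep_outT (h1 : ∀ C ∈ Φ, outT σ C ∈ Φ) (h2 : ∀ C ∈ Φ, outT σ.symm C ∈ Φ)
    (C D : Computer) (n : ℕ) : nstep Φ (outT σ C) (outT σ D) n = nstep Φ C D n := by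
  have hpaths : ∀ x : Str, (x.length = n ∧ shiftC C x = D) ↔
      (x.length = n ∧ shiftC (outT σ C) x = outT σ D) := fun x => by
    rw [shiftC_outT, (outT_injective σ).eq_iff]
  unfold nstep
  rw [tree_outT h1 h2]
  exact ((Equiv.subtypeEquivRight hpaths).tsum_eq
    fun x => pathProb (tree Φ C) (x : Str)).symm

lemma PosRecurrent.apply_outT {μ : Computer → ℝ} (h : PosRecurrent Φ μ)
    (h1 : ∀ C ∈ Φ, outT σ C ∈ Φ) (h2 : ∀ C ∈ Φ, outT σ.symm C ∈ Φ)
    {C : Computer} (hC : C ∈ Φ) : μ (outT σ C) = μ C := by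
  have hlim := h.tendsto (outT σ C) (h1 C hC) (outT σ C) (h1 C hC)
  simp only [nstep_outT h1 h2] at hlim
  exact tendsto_nhds_unique hlim (h.tendsto C hC C hC)

lemma strProb_some_apply {μ : Computer → ℝ}
    (h1 : ∀ C ∈ Φ, outT σ C ∈ Φ) (h2 : ∀ C ∈ Φ, outT σ.symm C ∈ Φ)
    (hμ : ∀ C ∈ Φ, μ (outT σ C) = μ C) (s : Str) :
    strProb Φ μ (some (σ s)) = strProb Φ μ (some s) := by
  let e : {C : Computer // C ∈ Φ ∧ C [] = some s} ≃
      {C : Computer // C ∈ Φ ∧ C [] = some (σ s)} :=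
    { toFun := fun C => ⟨outT σ C, h1 C C.2.1, by simp [outT, C.2.2]⟩
      invFun := fun C => ⟨outT σ.symm C, h2 C C.2.1, by simp [outT, C.2.2]⟩
      left_inv := fun C => Subtype.ext (outT_symm_outT σ C)
      right_inv := fun C => Subtype.ext (outT_outT_symm σ C) }
  unfold strProb
  rw [← e.tsum_eq]
  exact tsum_congr fun C => hμ C C.2.1

end Invariance

/-- Output symmetry of the stationary distribution: if `Φ` is positive recurrent
and closed under the output transformation `σ` and its inverse, then
`μ(C|Φ) = μ(σ∘C|Φ)` for every `C ∈ Φ` and `μ(s|Φ) = μ(σ(s)|Φ)` for every string `s`. -/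
theorem output_symmetry (Φ : Set Computer) (μ : Computer → ℝ)
    (h : PosRecurrent Φ μ) (σ : Equiv.Perm Str)
    (h1 : ∀ C ∈ Φ, outT σ C ∈ Φ) (h2 : ∀ C ∈ Φ, outT σ.symm C ∈ Φ) :
    (∀ C ∈ Φ, μ C = μ (outT σ C)) ∧
    (∀ s : Str, strProb Φ μ (some s) = strProb Φ μ (some (σ s))) := by
  have hμ : ∀ C ∈ Φ, μ (outT σ C) = μ C := fun _ hC => h.apply_outT h1 h2 hC
  exact ⟨fun C hC => (hμ C hC).symm, fun s => (strProb_some_apply h1 h2 hμ s).symm⟩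
end
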